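/- arXiv:1402.5221 — 3 statements merged into one kernel-verified Lean document; each statement's English description precedes it below -/
import Mathlib

section
/- Consider the implicit finite volume scheme on a finite set of control volumes K with positive measures m(K), transmissivity coefficients τ_{K,σ} ≥ 0, time step δt > 0, monotone Lipschitz consistent conservative numerical fluxes F_{K,σ}, and nondecreasing Lipschitz φ: m(K)(u_K^{n+1}-u_K^n)/δt + Σ_{σ∈ε_K} ( F_{K,σ}(u_K^{n+1}, u_{K,σ}^{n+1}) - τ_{K,σ}(φ(u_{K,σ}^{n+1}) - φ(u_K^{n+1})) ) = 0, where Σ_{σ∈ε_K} F_{K,σ}(s,s) = 0 for any constant s (zero-flux/divergence-free consistency) and f(0)=f(u_max)=0. If u_K^n ∈ [0, u_max] for all K, then any solution (u_K^{n+1})_K of the scheme satisfies u_K^{n+1} ∈ [0, u_max] for all K. -/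
/-- Discrete maximum principle for the implicit finite volume scheme with zero-flux
boundary condition: if the previous time level values lie in `[0, u_max]`, so do the
values at the next time level. Here `N K` is the set of neighbours of the control volume
`K`, `F K L` the (monotone, Lipschitz, conservative) numerical convection flux through
the interface between `K` and `L`, satisfying the zero-flux/divergence-free consistency
`∑_{L ∈ N K} F K L s s = 0`, `τ` the nonnegative transmissivities, `m` the (positive)
measures of the volumes, `δt > 0` the time step, `φ` nondecreasing Lipschitz, and `f`
Lipschitz with `f 0 = f u_max = 0`. -/
theorem discrete_maximum_principle
    {ι : Type*} [Fintype ι] [DecidableEq ι]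
    (N : ι → Finset ι) (hNsymm : ∀ K L, L ∈ N K ↔ K ∈ N L)
    (F : ι → ι → ℝ → ℝ → ℝ)
    (hmono₁ : ∀ K L b, Monotone (fun a => F K L a b))
    (hmono₂ : ∀ K L a, Antitone (fun b => F K L a b))
    (hFlip : ∃ C : ℝ, ∀ K L a b a' b', |F K L a b - F K L a' b'| ≤ C * (|a - a'| + |b - b'|))
    (hconserv : ∀ K L, L ∈ N K → ∀ a b, F K L a b = - F L K b a)
    (hcons : ∀ K s, ∑ L ∈ N K, F K L s s = 0)
    (τ : ι → ι → ℝ) (hτ : ∀ K L, 0 ≤ τ K L) (hτsymm : ∀ K L, τ K L = τ L K)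
    (m : ι → ℝ) (hm : ∀ K, 0 < m K) (δt : ℝ) (hδt : 0 < δt)
    (φ : ℝ → ℝ) (hφ : Monotone φ)
    (hφlip : ∃ Lφ : ℝ, ∀ a b, |φ a - φ b| ≤ Lφ * |a - b|)
    (f : ℝ → ℝ) (hflip : ∃ Lf : ℝ, ∀ a b, |f a - f b| ≤ Lf * |a - b|)
    (umax : ℝ) (humax : 0 < umax) (hf0 : f 0 = 0) (hfumax : f umax = 0)
    (un u' : ι → ℝ) (hun : ∀ K, un K ∈ Set.Icc (0 : ℝ) umax)
    (hscheme : ∀ K, m K * (u' K - un K) / δt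
        + ∑ L ∈ N K, (F K L (u' K) (u' L) - τ K L * (φ (u' L) - φ (u' K))) = 0) :
    ∀ K, u' K ∈ Set.Icc (0 : ℝ) umax := by
  intro K
  obtain ⟨K₀, -, hK₀⟩ := Finset.exists_max_image Finset.univ u' ⟨K, Finset.mem_univ K⟩
  obtain ⟨K₁, -, hK₁⟩ := Finset.exists_min_image Finset.univ u' ⟨K, Finset.mem_univ K⟩
  simp only [Finset.mem_univ, forall_true_left] at hK₀ hK₁
  have hmax : u' K₀ ≤ un K₀ := by
    have hsum : ∑ L ∈ N K₀, F K₀ L (u' K₀) (u' K₀)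
        ≤ ∑ L ∈ N K₀, (F K₀ L (u' K₀) (u' L) - τ K₀ L * (φ (u' L) - φ (u' K₀))) := by
      apply Finset.sum_le_sum
      intro L _
      have h1 : F K₀ L (u' K₀) (u' K₀) ≤ F K₀ L (u' K₀) (u' L) :=
        hmono₂ K₀ L (u' K₀) (hK₀ L)
      have h2 : τ K₀ L * (φ (u' L) - φ (u' K₀)) ≤ 0 :=
        mul_nonpos_of_nonneg_of_nonpos (hτ K₀ L) (by linarith [hφ (hK₀ L)])
      linarith
    rw [hcons K₀ (u' K₀)] at hsum
    have hsch := hscheme K₀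
    have hdiff : m K₀ * (u' K₀ - un K₀) / δt ≤ 0 := by linarith
    have h := mul_le_mul_of_nonneg_right hdiff hδt.le
    rw [div_mul_cancel₀ _ hδt.ne', zero_mul] at h
    nlinarith [hm K₀]
  have hmin : un K₁ ≤ u' K₁ := by
    have hsum : ∑ L ∈ N K₁, (F K₁ L (u' K₁) (u' L) - τ K₁ L * (φ (u' L) - φ (u' K₁)))
        ≤ ∑ L ∈ N K₁, F K₁ L (u' K₁) (u' K₁) := by
      apply Finset.sum_le_sum
      intro L _
      have h1 : F K₁ L (u' K₁) (u' L) ≤ F K₁ L (u' K₁) (u' K₁) :=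
        hmono₂ K₁ L (u' K₁) (hK₁ L)
      have h2 : 0 ≤ τ K₁ L * (φ (u' L) - φ (u' K₁)) :=
        mul_nonneg (hτ K₁ L) (by linarith [hφ (hK₁ L)])
      linarith
    rw [hcons K₁ (u' K₁)] at hsum
    have hsch := hscheme K₁
    have hdiff : 0 ≤ m K₁ * (u' K₁ - un K₁) / δt := by linarith
    have h := mul_le_mul_of_nonneg_right hdiff hδt.le
    rw [div_mul_cancel₀ _ hδt.ne', zero_mul] at h
    nlinarith [hm K₁]
  exact ⟨le_trans (le_trans (hun K₁).1 hmin) (hK₁ K),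
    le_trans (hK₀ K) (le_trans hmax (hun K₀).2)⟩
end

section
/- Under the assumptions of the discrete maximum principle (monotone, Lipschitz, consistent, conservative numerical fluxes; nondecreasing Lipschitz φ; f(0)=f(u_max)=0), the implicit finite volume scheme has at most one solution (u_K^{n+1})_K for given data (u_K^n)_K ∈ [0,u_max]: the map defining the scheme is monotone in the sense that if two solution vectors u, v satisfy the scheme with data u^n ≤ v^n componentwise, then u^{n+1} ≤ v^{n+1} componentwise. -/
/-- Monotonicity / discrete comparison principle for the implicit finite volume scheme
(hence uniqueness of the discrete solution): under the assumptions of the discrete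
maximum principle, if two solution vectors `u'`, `v'` of the scheme correspond to data
`un ≤ vn` componentwise (with values in `[0, u_max]`), then `u' ≤ v'` componentwise. -/
theorem discrete_comparison_principle
    {ι : Type*} [Fintype ι] [DecidableEq ι]
    (N : ι → Finset ι) (hNsymm : ∀ K L, L ∈ N K ↔ K ∈ N L)
    (F : ι → ι → ℝ → ℝ → ℝ)
    (hmono₁ : ∀ K L b, Monotone (fun a => F K L a b))
    (hmono₂ : ∀ K L a, Antitone (fun b => F K L a b))
    (hFlip : ∃ C : ℝ, ∀ K L a b a' b', |F K L a b - F K L a' b'| ≤ C * (|a - a'| + |b - b'|))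
    (hconserv : ∀ K L, L ∈ N K → ∀ a b, F K L a b = - F L K b a)
    (hcons : ∀ K s, ∑ L ∈ N K, F K L s s = 0)
    (τ : ι → ι → ℝ) (hτ : ∀ K L, 0 ≤ τ K L) (hτsymm : ∀ K L, τ K L = τ L K)
    (m : ι → ℝ) (hm : ∀ K, 0 < m K) (δt : ℝ) (hδt : 0 < δt)
    (φ : ℝ → ℝ) (hφ : Monotone φ)
    (hφlip : ∃ Lφ : ℝ, ∀ a b, |φ a - φ b| ≤ Lφ * |a - b|)
    (f : ℝ → ℝ) (hflip : ∃ Lf : ℝ, ∀ a b, |f a - f b| ≤ Lf * |a - b|)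
    (umax : ℝ) (humax : 0 < umax) (hf0 : f 0 = 0) (hfumax : f umax = 0)
    (un vn u' v' : ι → ℝ)
    (hun : ∀ K, un K ∈ Set.Icc (0 : ℝ) umax) (hvn : ∀ K, vn K ∈ Set.Icc (0 : ℝ) umax)
    (hdata : ∀ K, un K ≤ vn K)
    (hu'scheme : ∀ K, m K * (u' K - un K) / δt
        + ∑ L ∈ N K, (F K L (u' K) (u' L) - τ K L * (φ (u' L) - φ (u' K))) = 0)
    (hv'scheme : ∀ K, m K * (v' K - vn K) / δt
        + ∑ L ∈ N K, (F K L (v' K) (v' L) - τ K L * (φ (v' L) - φ (v' K))) = 0) :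
    ∀ K, u' K ≤ v' K := by
  
  classical
  set w : ι → ℝ := fun K => max (u' K) (v' K) with hw
  have hwv : ∀ K, v' K ≤ w K := fun K => le_max_right _ _
  have hwu : ∀ K, u' K ≤ w K := fun K => le_max_left _ _
  -- the global sum of flux terms vanishes by conservativity and symmetry
  have hzero : ∀ x : ι → ℝ,
      ∑ K, ∑ L ∈ N K, (F K L (x K) (x L) - τ K L * (φ (x L) - φ (x K))) = 0 := by
    intro x
    set g : ι → ι → ℝ := fun K L => F K L (x K) (x L) - τ K L * (φ (x L) - φ (x K)) with hg
    have hanti : ∀ K L, L ∈ N K → g K L = - g L K := by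
      intro K L hL
      have h1 := hconserv K L hL (x K) (x L)
      simp only [hg, h1, hτsymm K L]
      ring
    have hswap : ∑ K, ∑ L ∈ N K, g L K = ∑ K, ∑ L ∈ N K, g K L := by
      refine Finset.sum_comm' (s' := fun L => N L) (t' := Finset.univ) ?_
      intro K L
      simp [hNsymm K L]
    have hkey : ∑ K, ∑ L ∈ N K, g K L = - ∑ K, ∑ L ∈ N K, g K L := by
      calc ∑ K, ∑ L ∈ N K, g K L
          = ∑ K, ∑ L ∈ N K, -(g L K) :=
            Finset.sum_congr rfl fun K _ => Finset.sum_congr rfl fun L hL => hanti K L hL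
        _ = - ∑ K, ∑ L ∈ N K, g L K := by simp
        _ = - ∑ K, ∑ L ∈ N K, g K L := by rw [hswap]
    linarith
  -- rearranged schemes
  have hu'eq : ∀ K, ∑ L ∈ N K, (F K L (u' K) (u' L) - τ K L * (φ (u' L) - φ (u' K)))
      = m K * (un K - u' K) / δt := by
    intro K
    have h := hu'scheme K
    have h2 : m K * (un K - u' K) / δt = -(m K * (u' K - un K) / δt) := by ring
    linarith
  have hv'eq : ∀ K, ∑ L ∈ N K, (F K L (v' K) (v' L) - τ K L * (φ (v' L) - φ (v' K)))
      = m K * (vn K - v' K) / δt := by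
    intro K
    have h := hv'scheme K
    have h2 : m K * (vn K - v' K) / δt = -(m K * (v' K - vn K) / δt) := by ring
    linarith
  -- key pointwise inequality: w is a subsolution for the data vn
  have key : ∀ K, ∑ L ∈ N K, (F K L (w K) (w L) - τ K L * (φ (w L) - φ (w K)))
      ≤ m K * (vn K - w K) / δt := by
    intro K
    rcases le_total (v' K) (u' K) with h | h
    · have hwK : w K = u' K := max_eq_left h
      rw [hwK]
      have hle : ∑ L ∈ N K, (F K L (u' K) (w L) - τ K L * (φ (w L) - φ (u' K)))
          ≤ ∑ L ∈ N K, (F K L (u' K) (u' L) - τ K L * (φ (u' L) - φ (u' K))) := by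
        refine Finset.sum_le_sum fun L _ => ?_
        have h1 : F K L (u' K) (w L) ≤ F K L (u' K) (u' L) := hmono₂ K L (u' K) (hwu L)
        have h2 : τ K L * φ (u' L) ≤ τ K L * φ (w L) :=
          mul_le_mul_of_nonneg_left (hφ (hwu L)) (hτ K L)
        rw [mul_sub, mul_sub]
        linarith
      have hdiv : m K * (un K - u' K) / δt ≤ m K * (vn K - u' K) / δt := by
        gcongr
        · exact le_of_lt (hm K)
        · exact hdata K
      have heq := hu'eq K
      linarith
    · have hwK : w K = v' K := max_eq_right h
      rw [hwK]
      have hle : ∑ L ∈ N K, (F K L (v' K) (w L) - τ K L * (φ (w L) - φ (v' K)))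
          ≤ ∑ L ∈ N K, (F K L (v' K) (v' L) - τ K L * (φ (v' L) - φ (v' K))) := by
        refine Finset.sum_le_sum fun L _ => ?_
        have h1 : F K L (v' K) (w L) ≤ F K L (v' K) (v' L) := hmono₂ K L (v' K) (hwv L)
        have h2 : τ K L * φ (v' L) ≤ τ K L * φ (w L) :=
          mul_le_mul_of_nonneg_left (hφ (hwv L)) (hτ K L)
        rw [mul_sub, mul_sub]
        linarith
      have heq := hv'eq K
      linarith
  -- global balance
  have hsum1 : (0 : ℝ) ≤ ∑ K, m K * (vn K - w K) / δt := by
    calc (0 : ℝ) = ∑ K, ∑ L ∈ N K, (F K L (w K) (w L) - τ K L * (φ (w L) - φ (w K))) :=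
          (hzero w).symm
      _ ≤ ∑ K, m K * (vn K - w K) / δt := Finset.sum_le_sum fun K _ => key K
  have hsum2 : ∑ K, m K * (vn K - v' K) / δt = 0 := by
    calc ∑ K, m K * (vn K - v' K) / δt
        = ∑ K, ∑ L ∈ N K, (F K L (v' K) (v' L) - τ K L * (φ (v' L) - φ (v' K))) :=
          Finset.sum_congr rfl fun K _ => (hv'eq K).symm
      _ = 0 := hzero v'
  have hnonneg : ∀ K ∈ Finset.univ, (0 : ℝ) ≤ m K * (w K - v' K) / δt := by
    intro K _
    have : 0 ≤ m K * (w K - v' K) :=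
      mul_nonneg (le_of_lt (hm K)) (by linarith [hwv K])
    positivity
  have hsumle : ∑ K, m K * (w K - v' K) / δt ≤ 0 := by
    have hsplit : ∑ K, m K * (w K - v' K) / δt
        = ∑ K, m K * (vn K - v' K) / δt - ∑ K, m K * (vn K - w K) / δt := by
      rw [← Finset.sum_sub_distrib]
      exact Finset.sum_congr rfl fun K _ => by ring
    linarith
  have hall := (Finset.sum_eq_zero_iff_of_nonneg hnonneg).mp
    (le_antisymm hsumle (Finset.sum_nonneg hnonneg))
  intro K
  have hK := hall K (Finset.mem_univ K)
  have hwK : w K = v' K := by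
    have hδt' : δt ≠ 0 := ne_of_gt hδt
    have hmK : m K ≠ 0 := ne_of_gt (hm K)
    have h0 : m K * (w K - v' K) = 0 := by
      field_simp at hK
      linarith
    have h1 := (mul_eq_zero.mp h0).resolve_left hmK
    linarith
  linarith [hwu K, hwK.le]
end

section
/- Let (uₙ) be a sequence in L^∞(Q) bounded by M, converging to μ ∈ L^∞(Q × (0,1)) in the nonlinear weak-* sense: for every continuous g : [-M,M] → ℝ, g(uₙ) ⇀ ∫₀¹ g(μ(·,α)) dα weakly-* in L^∞(Q). If μ(t,x,α) is independent of α, i.e., μ(t,x,α) = u(t,x) for a.e. (t,x,α), then uₙ → u strongly in L^p(Q) for every p ∈ [1, ∞). -/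
/-!
Because `μ(z, ·) ≡ u(z)`, the nonlinear weak-* limit of `g(uₙ)` is simply `g(u)`.
Testing with a bounded continuous `g` that vanishes exactly on `[-M, M]` shows `|u| ≤ M`.
Testing with `g(x) = x²` against `ψ = 1` and with `g(x) = x` against `ψ = u` gives
`∫ (uₙ - u)² = ∫ uₙ² - 2 ∫ uₙ u + ∫ u² → 0`. Finally `|uₙ - u| ≤ 2M`, so
`|uₙ - u|^p ≤ (2M)^(p-1) |uₙ - u|`, and Cauchy–Schwarz on the finite measure space bounds
`∫ |uₙ - u|` by a multiple of `(∫ (uₙ - u)²)^(1/2)`.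
-/

open Filter Topology MeasureTheory Set

theorem intervalIntegral_zero_one_eq_of_eqOn_Ioo {f : ℝ → ℝ} {c : ℝ}
    (h : EqOn f (fun _ => c) (Ioo 0 1)) : ∫ α in (0:ℝ)..1, f α = c := by
  rw [intervalIntegral.integral_of_le zero_le_one, integral_Ioc_eq_integral_Ioo,
    setIntegral_congr_fun measurableSet_Ioo h]
  simp

theorem rpow_le_rpow_sub_one_mul {x K p : ℝ} (hx : 0 ≤ x) (hxK : x ≤ K) (hp : 1 ≤ p) :
    x ^ p ≤ K ^ (p - 1) * x := by
  calc x ^ p = x ^ (p - 1) * x := by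
        rw [← Real.rpow_add_one' hx (by linarith), sub_add_cancel]
    _ ≤ K ^ (p - 1) * x := by gcongr

section

variable {α : Type*} [MeasurableSpace α] {ν : Measure α}

theorem tendsto_integral_sub_sq_of_tendsto {un : ℕ → α → ℝ} {u : α → ℝ}
    (hun : ∀ n, MemLp (un n) 2 ν) (hu : MemLp u 2 ν)
    (hsq : Tendsto (fun n => ∫ z, un n z ^ 2 ∂ν) atTop (𝓝 (∫ z, u z ^ 2 ∂ν)))
    (hmul : Tendsto (fun n => ∫ z, un n z * u z ∂ν) atTop (𝓝 (∫ z, u z ^ 2 ∂ν))) :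
    Tendsto (fun n => ∫ z, (un n z - u z) ^ 2 ∂ν) atTop (𝓝 0) := by
  have hexpand : ∀ n, ∫ z, (un n z - u z) ^ 2 ∂ν
      = ∫ z, un n z ^ 2 ∂ν - 2 * ∫ z, un n z * u z ∂ν + ∫ z, u z ^ 2 ∂ν := fun n => by
    have hprod : Integrable (fun z => un n z * u z) ν := (hun n).integrable_mul hu
    have hdiff : Integrable (fun z => un n z ^ 2 - 2 * (un n z * u z)) ν :=
      (hun n).integrable_sq.sub (hprod.const_mul 2)
    simp_rw [sub_sq, mul_assoc]
    rw [integral_add hdiff hu.integrable_sq,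
      integral_sub (hun n).integrable_sq (hprod.const_mul 2), integral_const_mul]
  have hlim := (hsq.sub (hmul.const_mul 2)).add_const (∫ z, u z ^ 2 ∂ν)
  rw [show ∫ z, u z ^ 2 ∂ν - 2 * ∫ z, u z ^ 2 ∂ν + ∫ z, u z ^ 2 ∂ν = 0 by ring] at hlim
  simpa only [hexpand] using hlim

theorem integral_abs_le_sqrt_mul_sqrt_integral_sq [IsFiniteMeasure ν] {f : α → ℝ}
    (hf : MemLp f 2 ν) :
    ∫ z, |f z| ∂ν ≤ √(ν.real univ) * √(∫ z, f z ^ 2 ∂ν) := by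
  have hCS := integral_mul_le_Lp_mul_Lq_of_nonneg Real.HolderConjugate.two_two
    (ae_of_all ν fun _ => zero_le_one) (ae_of_all ν fun z => abs_nonneg (f z))
    (by simpa using memLp_const (1 : ℝ)) (by rw [ENNReal.ofReal_ofNat]; exact hf.abs)
  simpa [Real.sqrt_eq_rpow, ← one_div] using hCS

theorem ae_abs_le_of_tendsto_integral_comp [IsFiniteMeasure ν] {un : ℕ → α → ℝ} {u : α → ℝ}
    {M : ℝ}
    (hbound : ∀ n, ∀ᵐ z ∂ν, |un n z| ≤ M) (hu : AEMeasurable u ν)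
    (hlim : ∀ g : ℝ → ℝ, Continuous g →
      Tendsto (fun n => ∫ z, g (un n z) ∂ν) atTop (𝓝 (∫ z, g (u z) ∂ν))) :
    ∀ᵐ z ∂ν, |u z| ≤ M := by
  set g : ℝ → ℝ := fun x => min (max (|x| - M) 0) 1
  have hg : Continuous g := by fun_prop
  have hg_nonneg : ∀ x, 0 ≤ g x := fun x => le_min (le_max_right _ _) zero_le_one
  have hg_pos : ∀ x, M < |x| → 0 < g x := fun x hx =>
    lt_min (lt_max_of_lt_left (by linarith)) zero_lt_one
  have hgun : ∀ n, ∫ z, g (un n z) ∂ν = 0 := fun n =>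
    integral_eq_zero_of_ae <| (hbound n).mono fun z hz => by simp [g, hz]
  have hgu : ∫ z, g (u z) ∂ν = 0 :=
    tendsto_nhds_unique (hlim g hg) (by simp only [hgun, tendsto_const_nhds])
  have hgu_int : Integrable (fun z => g (u z)) ν :=
    Integrable.of_bound (hg.measurable.comp_aemeasurable hu).aestronglyMeasurable 1 <|
      ae_of_all ν fun z => by
        simp only [Real.norm_eq_abs, abs_of_nonneg (hg_nonneg _)]
        exact min_le_right _ _
  filter_upwards [(integral_eq_zero_iff_of_nonneg (fun z => hg_nonneg (u z)) hgu_int).1 hgu]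
    with z hz
  exact not_lt.1 fun h => (hg_pos _ h).ne' hz

theorem tendsto_integral_abs_rpow_of_tendsto_integral_sq [IsFiniteMeasure ν] {f : ℕ → α → ℝ}
    {K p : ℝ} (hp : 1 ≤ p) (hf : ∀ n, AEStronglyMeasurable (f n) ν)
    (hbound : ∀ n, ∀ᵐ z ∂ν, |f n z| ≤ K)
    (hsq : Tendsto (fun n => ∫ z, f n z ^ 2 ∂ν) atTop (𝓝 0)) :
    Tendsto (fun n => ∫ z, |f n z| ^ p ∂ν) atTop (𝓝 0) := by
  have hL2 : ∀ n, MemLp (f n) 2 ν := fun n => MemLp.of_bound (hf n) K (hbound n)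
  -- `|K|` rather than `K`: `Real.rpow` of a negative base can be negative.
  have hbound_L1 : ∀ n, ∫ z, |f n z| ^ p ∂ν
      ≤ |K| ^ (p - 1) * (√(ν.real univ) * √(∫ z, f n z ^ 2 ∂ν)) := fun n =>
    calc ∫ z, |f n z| ^ p ∂ν ≤ ∫ z, |K| ^ (p - 1) * |f n z| ∂ν :=
          integral_mono_of_nonneg (ae_of_all ν fun z => by positivity)
            (((hL2 n).integrable one_le_two).abs.const_mul _)
            ((hbound n).mono fun z hz =>
              rpow_le_rpow_sub_one_mul (abs_nonneg _) (hz.trans (le_abs_self K)) hp)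
      _ ≤ |K| ^ (p - 1) * (√(ν.real univ) * √(∫ z, f n z ^ 2 ∂ν)) := by
          rw [integral_const_mul]
          gcongr
          exact integral_abs_le_sqrt_mul_sqrt_integral_sq (hL2 n)
  refine squeeze_zero (fun n => integral_nonneg fun z => by positivity) hbound_L1 ?_
  simpa using (hsq.sqrt.const_mul _).const_mul (|K| ^ (p - 1))

end

theorem nonlinear_weak_star_reduction_implies_strong_convergence_general
    {ℓ : ℕ} (Q : Set (ℝ × (Fin ℓ → ℝ)))
    (hQfin : MeasureTheory.volume Q < ⊤)
    (M : ℝ)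
    (un : ℕ → (ℝ × (Fin ℓ → ℝ)) → ℝ)
    (hmeas : ∀ n, AEMeasurable (un n) (MeasureTheory.volume.restrict Q))
    (hbound : ∀ n, ∀ᵐ z ∂(MeasureTheory.volume.restrict Q), |un n z| ≤ M)
    (μ : (ℝ × (Fin ℓ → ℝ)) → ℝ → ℝ) (u : (ℝ × (Fin ℓ → ℝ)) → ℝ)
    (humeas : AEMeasurable u (MeasureTheory.volume.restrict Q))
    (hweak : ∀ g : ℝ → ℝ, ContinuousOn g (Set.Icc (-M) M) →
      ∀ ψ : (ℝ × (Fin ℓ → ℝ)) → ℝ, IntegrableOn ψ Q →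
        Tendsto (fun n => ∫ z in Q, g (un n z) * ψ z) atTop
          (𝓝 (∫ z in Q, (∫ α in (0:ℝ)..1, g (μ z α)) * ψ z)))
    (hindep : ∀ᵐ z ∂(MeasureTheory.volume.restrict Q),
      ∀ α ∈ Set.Ioo (0:ℝ) 1, μ z α = u z) :
    ∀ p : ℝ, 1 ≤ p →
      Tendsto (fun n => ∫ z in Q, |un n z - u z| ^ p) atTop (𝓝 0) := by
  have : IsFiniteMeasure (volume.restrict Q) := isFiniteMeasure_restrict.2 hQfin.ne
  have hdirac : ∀ g : ℝ → ℝ, ContinuousOn g (Icc (-M) M) →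
      ∀ ψ : (ℝ × (Fin ℓ → ℝ)) → ℝ, IntegrableOn ψ Q →
        Tendsto (fun n => ∫ z in Q, g (un n z) * ψ z) atTop (𝓝 (∫ z in Q, g (u z) * ψ z)) := by
    intro g hg ψ hψ
    convert hweak g hg ψ hψ using 2
    refine integral_congr_ae (hindep.mono fun z hz => ?_)
    simp only [intervalIntegral_zero_one_eq_of_eqOn_Ioo fun α hα => congrArg g (hz α hα)]
  have hone : IntegrableOn (fun _ => (1 : ℝ)) Q := integrableOn_const hQfin.ne
  have hu_bound : ∀ᵐ z ∂(volume.restrict Q), |u z| ≤ M :=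
    ae_abs_le_of_tendsto_integral_comp hbound humeas fun g hg => by
      simpa using hdirac g hg.continuousOn _ hone
  have memLp_two_of_abs_le : ∀ {v : (ℝ × (Fin ℓ → ℝ)) → ℝ}, AEMeasurable v (volume.restrict Q) →
      (∀ᵐ z ∂(volume.restrict Q), |v z| ≤ M) → MemLp v 2 (volume.restrict Q) :=
    fun hv hvM => MemLp.of_bound hv.aestronglyMeasurable M hvM
  have hu_L2 := memLp_two_of_abs_le humeas hu_bound
  have hsq_sub := tendsto_integral_sub_sq_of_tendsto
    (fun n => memLp_two_of_abs_le (hmeas n) (hbound n)) hu_L2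
    (by simpa using hdirac (· ^ 2) (continuous_pow 2).continuousOn _ hone)
    (by simpa [sq] using hdirac id continuousOn_id u (hu_L2.integrable one_le_two))
  exact fun p hp => tendsto_integral_abs_rpow_of_tendsto_integral_sq hp
    (fun n => ((hmeas n).sub humeas).aestronglyMeasurable)
    (fun n => (hbound n).and hu_bound |>.mono fun z hz =>
      (abs_sub _ _).trans (add_le_add hz.1 hz.2)) hsq_sub

/-- If a uniformly bounded sequence `(uₙ) ⊂ L^∞(Q)` converges in the nonlinear weak-*
sense to a process function `μ(·,α)` (i.e. `g(uₙ) ⇀ ∫₀¹ g(μ(·,α)) dα` weak-* in `L^∞(Q)`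
for every continuous `g` on `[-M,M]`), and the limit `μ` is independent of `α`,
`μ(z,α) = u(z)`, then `uₙ → u` strongly in `L^p(Q)` for every `p ∈ [1,∞)`. -/
theorem nonlinear_weak_star_reduction_implies_strong_convergence
    {ℓ : ℕ} (Q : Set (ℝ × (Fin ℓ → ℝ))) (hQmeas : MeasurableSet Q)
    (hQfin : MeasureTheory.volume Q < ⊤)
    (M : ℝ) (hM : 0 < M)
    (un : ℕ → (ℝ × (Fin ℓ → ℝ)) → ℝ)
    (hmeas : ∀ n, AEMeasurable (un n) (MeasureTheory.volume.restrict Q))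
    (hbound : ∀ n, ∀ᵐ z ∂(MeasureTheory.volume.restrict Q), |un n z| ≤ M)
    (μ : (ℝ × (Fin ℓ → ℝ)) → ℝ → ℝ) (u : (ℝ × (Fin ℓ → ℝ)) → ℝ)
    (humeas : AEMeasurable u (MeasureTheory.volume.restrict Q))
    (hweak : ∀ g : ℝ → ℝ, ContinuousOn g (Set.Icc (-M) M) →
      ∀ ψ : (ℝ × (Fin ℓ → ℝ)) → ℝ, IntegrableOn ψ Q →
        Tendsto (fun n => ∫ z in Q, g (un n z) * ψ z) atTop
          (𝓝 (∫ z in Q, (∫ α in (0:ℝ)..1, g (μ z α)) * ψ z)))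
    (hindep : ∀ᵐ z ∂(MeasureTheory.volume.restrict Q),
      ∀ α ∈ Set.Ioo (0:ℝ) 1, μ z α = u z) :
    ∀ p : ℝ, 1 ≤ p →
      Tendsto (fun n => ∫ z in Q, |un n z - u z| ^ p) atTop (𝓝 0) :=
  nonlinear_weak_star_reduction_implies_strong_convergence_general Q hQfin M un hmeas hbound μ u
    humeas hweak hindep
end
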